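/- Let F be a field of characteristic zero, complete with respect to a non-Archimedean absolute value |·|, with valuation ring K. Let a_0, ..., a_m ∈ K with |a_0| = 1 and |a_i| < 1 for 1 ≤ i ≤ m, and let f = Σ f_i x^i ∈ K[[x]]. Let (c_j) be the coefficients of (a_m t^m + ... + a_0)^{-1} in F[[t]]. Then for each k the series Σ_{n≥0} c_n · binom(n+k, n) · n! · f_{k+n} converges in K, and the power series w(x) = Σ_k (Σ_n c_n binom(n+k,n) n! f_{k+n}) x^k lies in K[[x]] and satisfies a_m w^{(m)} + ... + a_1 w' + a_0 w = f. -/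

import Mathlib

/-!
With `Q(t) = a₀ + ⋯ + aₘ tᵐ` and `D = d/dx`, the solution is `w = Q(D)⁻¹ f = ∑ₙ cₙ f⁽ⁿ⁾`: the
`k`-th coefficient of `cₙ f⁽ⁿ⁾` is the `n`-th summand in the statement. The identity `c · Q = 1` is
the recursion `a₀ cₙ = -∑_{1 ≤ i ≤ m} aᵢ c_{n-i}`, so the ultrametric inequality together with
`|a₀| = 1` and `|aᵢ| ≤ b < 1` gives `|cₙ| ≤ b^⌊n/(m+1)⌋ → 0`; since `D` preserves `K⟦x⟧`, the series
converge in `K`. Applying `Q(D)` termwise, `Q(D) w = ∑ⱼ [tʲ](c · Q) f⁽ʲ⁾ = f⁽⁰⁾ = f`.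
-/

open PowerSeries Filter Finset Topology
open scoped Nat

namespace PowerSeries

theorem coeff_mul_sum_monomial {R : Type*} [Semiring R] (p : R⟦X⟧) (a : ℕ → R) (m j : ℕ) :
    coeff j (p * ∑ i ∈ range (m + 1), monomial i (a i)) =
      ∑ i ∈ range (m + 1), if i ≤ j then coeff (j - i) p * a i else 0 := by
  simp only [mul_sum, map_sum, monomial_eq_C_mul_X_pow, ← mul_assoc, coeff_mul_X_pow',
    coeff_mul_C]

set_option linter.deprecated false in
theorem iterate_derivativeFun {R : Type*} [CommSemiring R] (n : ℕ) :
    (derivativeFun : R⟦X⟧ → R⟦X⟧)^[n] = (d⁄dX R)^[n] :=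
  rfl

theorem coeff_iterate_derivative_mk_tsum {F : Type*} [Field F] [TopologicalSpace F]
    [IsTopologicalRing F] [T2Space F] (c : ℕ → F) (g : ℕ → F⟦X⟧) (i k : ℕ) :
    coeff k ((d⁄dX F)^[i] (mk fun k => ∑' n, c n * coeff k (g n))) =
      ∑' n, c n * coeff k ((d⁄dX F)^[i] (g n)) := by
  simp only [coeff_iterate_derivative, coeff_mk, ← tsum_mul_left]
  exact tsum_congr fun n => mul_left_comm _ _ _

theorem sum_mul_tsum_eq_tsum_coeff_mul {R : Type*} [CommRing R] [TopologicalSpace R]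
    [IsTopologicalRing R] [T2Space R] (a c D : ℕ → R) (m : ℕ)
    (hs : ∀ i, Summable fun n => c n * D (i + n)) :
    ∑ i ∈ range (m + 1), a i * ∑' n, c n * D (i + n) =
      ∑' j, coeff j (mk c * ∑ i ∈ range (m + 1), monomial i (a i)) * D j := by
  set g : ℕ → ℕ → R := fun i j => if i ≤ j then c (j - i) * a i * D j else 0
  have hg_shift (i : ℕ) : (fun n => g i (n + i)) = fun n => a i * (c n * D (i + n)) := by
    funext n
    rw [add_comm n i]
    simp only [g, Nat.le_add_right, if_true, Nat.add_sub_cancel_left]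
    ring
  have hg_summable (i : ℕ) : Summable (g i) :=
    (summable_nat_add_iff i).1 (hg_shift i ▸ (hs i).mul_left (a i))
  have hrow (i : ℕ) : a i * ∑' n, c n * D (i + n) = ∑' j, g i j := by
    rw [← (hs i).tsum_mul_left, ← hg_shift i]
    refine (add_left_injective i).tsum_eq fun j hj => ⟨j - i, Nat.sub_add_cancel ?_⟩
    by_contra hij
    exact hj (if_neg hij)
  calc ∑ i ∈ range (m + 1), a i * ∑' n, c n * D (i + n)
      = ∑' j, ∑ i ∈ range (m + 1), g i j := by
        rw [Summable.tsum_finsetSum fun i _ => hg_summable i]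
        exact sum_congr rfl fun i _ => hrow i
    _ = _ := by
        refine tsum_congr fun j => ?_
        rw [coeff_mul_sum_monomial, sum_mul]
        refine sum_congr rfl fun i _ => ?_
        split_ifs <;> simp [g, *]

theorem norm_coeff_iterate_derivative_le_one {R : Type*} [NormedCommRing R] [NormOneClass R]
    [IsUltrametricDist R] {f : R⟦X⟧} (hf : ∀ k, ‖coeff k f‖ ≤ 1) (n k : ℕ) :
    ‖coeff k ((d⁄dX R)^[n] f)‖ ≤ 1 := by
  rw [coeff_iterate_derivative]
  exact (norm_mul_le _ _).trans
    (mul_le_one₀ (IsUltrametricDist.norm_natCast_le_one R _) (norm_nonneg _) (hf _))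

section InverseOfUnitPolynomial

variable {F : Type*} [NormedField F] [IsUltrametricDist F] {a c : ℕ → F} {m : ℕ}

-- The exponent is `n / (m + 1)` rather than `n / m` so that it tends to infinity also for `m = 0`.
theorem norm_le_pow_of_mul_sum_monomial_eq_one {b : ℝ} (hb0 : 0 ≤ b) (hb1 : b ≤ 1)
    (h0 : ‖a 0‖ = 1) (hab : ∀ i, 1 ≤ i → i ≤ m → ‖a i‖ ≤ b)
    (hc : mk c * ∑ i ∈ range (m + 1), monomial i (a i) = 1) (n : ℕ) :
    ‖c n‖ ≤ b ^ (n / (m + 1)) := by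
  induction n using Nat.strong_induction_on with
  | _ n ih =>
  have hrec : c n * a 0 +
      ∑ i ∈ range m, (if i + 1 ≤ n then c (n - (i + 1)) * a (i + 1) else 0) =
        if n = 0 then 1 else 0 := by
    have := congrArg (coeff n) hc
    rw [coeff_mul_sum_monomial, sum_range_succ', add_comm, coeff_one] at this
    simpa only [coeff_mk, zero_le, if_true, Nat.sub_zero] using this
  have hterm : ∀ i ∈ range m,
      ‖if i + 1 ≤ n then c (n - (i + 1)) * a (i + 1) else 0‖ ≤ b ^ (n / (m + 1)) := by
    intro i hi
    have him : i < m := mem_range.1 hi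
    split_ifs with hin
    · have hexp : n / (m + 1) ≤ (n - (i + 1)) / (m + 1) + 1 := by
        rw [← Nat.add_div_right _ m.succ_pos]
        exact Nat.div_le_div_right (by omega)
      calc ‖c (n - (i + 1)) * a (i + 1)‖
          ≤ b ^ ((n - (i + 1)) / (m + 1)) * b := by
            rw [norm_mul]
            exact mul_le_mul (ih _ (by omega)) (hab _ (by omega) (by omega))
              (norm_nonneg _) (by positivity)
        _ = b ^ ((n - (i + 1)) / (m + 1) + 1) := (pow_succ _ _).symm
        _ ≤ b ^ (n / (m + 1)) := pow_le_pow_of_le_one hb0 hb1 hexp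
    · simp only [norm_zero]
      positivity
  have hnorm : ‖c n‖ = ‖c n * a 0‖ := by rw [norm_mul, h0, mul_one]
  rcases n.eq_zero_or_pos with rfl | hn
  · simp only [nonpos_iff_eq_zero, Nat.add_eq_zero_iff, one_ne_zero, and_false, ↓reduceIte,
      sum_const_zero, add_zero] at hrec
    simp [hnorm, hrec]
  · rw [if_neg hn.ne', add_eq_zero_iff_eq_neg] at hrec
    rw [hnorm, hrec, norm_neg]
    exact IsUltrametricDist.norm_sum_le_of_forall_le_of_nonneg (by positivity) hterm

theorem tendsto_zero_of_mul_sum_monomial_eq_one (h0 : ‖a 0‖ = 1)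
    (ha : ∀ i, 1 ≤ i → i ≤ m → ‖a i‖ < 1)
    (hc : mk c * ∑ i ∈ range (m + 1), monomial i (a i) = 1) :
    Tendsto c atTop (𝓝 0) := by
  set b : NNReal := (Icc 1 m).sup fun i => ‖a i‖₊
  have hb1 : b < 1 := (Finset.sup_lt_iff one_pos).2 fun i hi => by
    rw [mem_Icc] at hi
    exact_mod_cast ha i hi.1 hi.2
  have hab (i : ℕ) (h1 : 1 ≤ i) (h2 : i ≤ m) : ‖a i‖ ≤ b :=
    NNReal.coe_le_coe.2 (le_sup (f := fun i => ‖a i‖₊) (mem_Icc.2 ⟨h1, h2⟩))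
  refine squeeze_zero_norm
    (norm_le_pow_of_mul_sum_monomial_eq_one b.2 (by exact_mod_cast hb1.le) h0 hab hc) ?_
  exact (tendsto_pow_atTop_nhds_zero_of_lt_one b.2 hb1).comp
    (Nat.tendsto_div_const_atTop m.succ_ne_zero)

end InverseOfUnitPolynomial

end PowerSeries

theorem summable_mul_of_tendsto_zero {R : Type*} [NormedRing R] [IsUltrametricDist R]
    [CompleteSpace R] {c D : ℕ → R} (hc : Tendsto c atTop (𝓝 0)) (hD : ∀ n, ‖D n‖ ≤ 1) :
    Summable fun n => c n * D n := by
  refine NonarchimedeanAddGroup.summable_of_tendsto_cofinite_zero ?_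
  rw [Nat.cofinite_eq_atTop]
  refine squeeze_zero_norm (fun n => ?_) (tendsto_norm_zero.comp hc)
  calc ‖c n * D n‖ ≤ ‖c n‖ * ‖D n‖ := norm_mul_le _ _
    _ ≤ ‖c n‖ := mul_le_of_le_one_right (norm_nonneg _) (hD n)

theorem nonarchimedean_existence_general (F : Type*) [NormedField F] [CompleteSpace F]
    (hna : ∀ x y : F, ‖x + y‖ ≤ max ‖x‖ ‖y‖)
    (m : ℕ) (a : ℕ → F) (h0 : ‖a 0‖ = 1)
    (ha : ∀ i, 1 ≤ i → i ≤ m → ‖a i‖ < 1) (c : ℕ → F)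
    (hc : PowerSeries.mk c *
      (∑ i ∈ Finset.range (m + 1), PowerSeries.monomial i (a i)) = 1)
    (f : PowerSeries F) (hf : ∀ k, ‖PowerSeries.coeff k f‖ ≤ 1) :
    (∀ k : ℕ, Summable fun n : ℕ =>
      c n * (Nat.choose (n + k) n : F) * (Nat.factorial n : F)
        * PowerSeries.coeff (k + n) f) ∧
    (∀ k : ℕ, ‖∑' n : ℕ,
      c n * (Nat.choose (n + k) n : F) * (Nat.factorial n : F)
        * PowerSeries.coeff (k + n) f‖ ≤ 1) ∧
    ∑ i ∈ Finset.range (m + 1),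
      PowerSeries.C (a i) * (PowerSeries.derivativeFun^[i]
        (PowerSeries.mk fun k => ∑' n : ℕ,
          c n * (Nat.choose (n + k) n : F) * (Nat.factorial n : F)
            * PowerSeries.coeff (k + n) f)) = f := by
  have : IsUltrametricDist F := .isUltrametricDist_of_forall_norm_add_le_max_norm hna
  have hterm (k n : ℕ) : c n * ((n + k).choose n : F) * (n ! : F) * coeff (k + n) f =
      c n * coeff k ((d⁄dX F)^[n] f) := by
    rw [coeff_iterate_derivative, Nat.ascFactorial_eq_factorial_mul_choose, add_comm n k]
    push_cast
    ring
  have hD := norm_coeff_iterate_derivative_le_one hf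
  have hsum (k i : ℕ) : Summable fun n => c n * coeff k ((d⁄dX F)^[i + n] f) :=
    summable_mul_of_tendsto_zero (tendsto_zero_of_mul_sum_monomial_eq_one h0 ha hc)
      fun n => hD (i + n) k
  have hc_le (n : ℕ) : ‖c n‖ ≤ 1 := by
    simpa only [one_pow] using norm_le_pow_of_mul_sum_monomial_eq_one zero_le_one le_rfl h0
      (fun i h1 h2 => (ha i h1 h2).le) hc n
  simp only [hterm, iterate_derivativeFun]
  refine ⟨fun k => by simpa only [zero_add] using hsum k 0, fun k => ?_, ?_⟩
  · refine IsUltrametricDist.norm_tsum_le_of_forall_le_of_nonneg zero_le_one fun n => ?_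
    exact (norm_mul_le _ _).trans (mul_le_one₀ (hc_le n) (norm_nonneg _) (hD n k))
  · ext k
    simp only [map_sum, coeff_C_mul, coeff_iterate_derivative_mk_tsum,
      ← Function.iterate_add_apply]
    rw [sum_mul_tsum_eq_tsum_coeff_mul a c (fun j => coeff k ((d⁄dX F)^[j] f)) m (hsum k), hc]
    simp [coeff_one]

/-- Existence over a complete non-Archimedean valued field: with `‖a 0‖ = 1`, `‖a i‖ < 1`
for `1 ≤ i ≤ m`, `f ∈ K⟦x⟧`, and `c` the coefficients of `(a_m t^m + ... + a_0)⁻¹`, for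
every `k` the series `∑_n c_n C(n+k,n) n! f_{k+n}` converges in `K`, and the power series
`w` with these sums as coefficients lies in `K⟦x⟧` and solves the equation. -/
theorem nonarchimedean_existence (F : Type*) [NormedField F] [CharZero F] [CompleteSpace F]
    (hna : ∀ x y : F, ‖x + y‖ ≤ max ‖x‖ ‖y‖)
    (m : ℕ) (hm : 1 ≤ m) (a : ℕ → F) (h0 : ‖a 0‖ = 1)
    (ha : ∀ i, 1 ≤ i → i ≤ m → ‖a i‖ < 1) (c : ℕ → F)
    (hc : PowerSeries.mk c *
      (∑ i ∈ Finset.range (m + 1), PowerSeries.monomial i (a i)) = 1)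
    (f : PowerSeries F) (hf : ∀ k, ‖PowerSeries.coeff k f‖ ≤ 1) :
    (∀ k : ℕ, Summable fun n : ℕ =>
      c n * (Nat.choose (n + k) n : F) * (Nat.factorial n : F)
        * PowerSeries.coeff (k + n) f) ∧
    (∀ k : ℕ, ‖∑' n : ℕ,
      c n * (Nat.choose (n + k) n : F) * (Nat.factorial n : F)
        * PowerSeries.coeff (k + n) f‖ ≤ 1) ∧
    ∑ i ∈ Finset.range (m + 1),
      PowerSeries.C (a i) * (PowerSeries.derivativeFun^[i]
        (PowerSeries.mk fun k => ∑' n : ℕ,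
          c n * (Nat.choose (n + k) n : F) * (Nat.factorial n : F)
            * PowerSeries.coeff (k + n) f)) = f :=
  nonarchimedean_existence_general F hna m a h0 ha c hc f hf
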